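/- arXiv:2407.20751 — 3 statements merged into one kernel-verified Lean document; each statement's English description precedes it below -/
import Mathlib

section
/- Let J ∈ ℕ, J ≥ 1, Δx = 1/J, Δt > 0. Let u* : Fin J → Fin J → ℝ be arbitrary and let p, p' : Fin J → ℝ satisfy p'_j = p_j + Δt · p_j · Δx · Σ_k (u*_{k,j} − u*_{j,k}) · p_k for all j. Then Σ_j p'_j Δx = Σ_j p_j Δx. In particular, if Σ_j p_j Δx = 1 then Σ_j p'_j Δx = 1. -/
open Finset

/-- Discrete conservation of probability (Proposition 3, part 2.a). -/
theorem discrete_FP_conservation (J : ℕ) (hJ : 1 ≤ J) (Δt : ℝ) (hΔt : 0 < Δt)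
    (Δx : ℝ) (hΔx : Δx = 1 / J)
    (ustar : Fin J → Fin J → ℝ) (p p' : Fin J → ℝ)
    (hstep : ∀ j, p' j = p j + Δt * (p j * Δx *
        ∑ k, (ustar k j - ustar j k) * p k)) :
    (∑ j, p' j * Δx = ∑ j, p j * Δx) ∧
    (∑ j, p j * Δx = 1 → ∑ j, p' j * Δx = 1) := by
  have hS : ∑ j, ∑ k, (ustar k j - ustar j k) * p k * p j = 0 := by
    have h1 : ∑ j, ∑ k, (ustar k j - ustar j k) * p k * p j
        = ∑ k, ∑ j, (ustar k j - ustar j k) * p k * p j := Finset.sum_comm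
    have h2 : ∑ k, ∑ j, (ustar k j - ustar j k) * p k * p j
        = -∑ j, ∑ k, (ustar k j - ustar j k) * p k * p j := by
      rw [← Finset.sum_neg_distrib]
      apply Finset.sum_congr rfl
      intro j _
      rw [← Finset.sum_neg_distrib]
      apply Finset.sum_congr rfl
      intro k _
      ring
    have := h1.trans h2
    linarith
  have hmain : ∑ j, p' j * Δx = ∑ j, p j * Δx := by
    have : ∑ j, p' j * Δx
        = ∑ j, (p j * Δx + Δt * Δx * Δx * ∑ k, (ustar k j - ustar j k) * p k * p j) := by
      apply Finset.sum_congr rfl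
      intro j _
      rw [hstep j]
      simp only [add_mul, Finset.mul_sum, Finset.sum_mul]
      congr 1
      apply Finset.sum_congr rfl
      intro k _
      ring
    rw [this, Finset.sum_add_distrib, ← Finset.mul_sum, hS]
    ring
  exact ⟨hmain, fun h => hmain.trans h⟩
end

section
/- Let J ∈ ℕ, J ≥ 1, Δx = 1/J, Δt > 0, M ≥ 0 with 2·M·Δt < 1. Let u* : Fin J → Fin J → ℝ satisfy 0 ≤ u*_{j,k} ≤ M for all j,k, and let p : Fin J → ℝ be nonnegative with Σ_k p_k Δx = 1. Define p'_j = p_j·(1 + Δt·Δx·Σ_k (u*_{k,j} − u*_{j,k})·p_k). Then p'_j ≥ 0 for all j, and moreover p'_j ≥ p_j·(1 − 2·M·Δt). -/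
open Finset

/-- Discrete nonnegativity preservation (Proposition 3, part 2.b). -/
theorem discrete_FP_nonnegativity (J : ℕ) (hJ : 1 ≤ J) (Δt : ℝ) (hΔt : 0 < Δt)
    (Δx : ℝ) (hΔx : Δx = 1 / J)
    (M : ℝ) (hM : 0 ≤ M) (hMΔt : 2 * M * Δt < 1)
    (ustar : Fin J → Fin J → ℝ)
    (hu : ∀ j k, 0 ≤ ustar j k ∧ ustar j k ≤ M)
    (p p' : Fin J → ℝ) (hp : ∀ j, 0 ≤ p j) (hsum : ∑ k, p k * Δx = 1)
    (hstep : ∀ j, p' j = p j * (1 + Δt * Δx *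
        ∑ k, (ustar k j - ustar j k) * p k)) :
    (∀ j, 0 ≤ p' j) ∧ (∀ j, p j * (1 - 2 * M * Δt) ≤ p' j) := by
  have hΔx0 : 0 ≤ Δx := by
    rw [hΔx]; positivity
  have key : ∀ j, p j * (1 - 2 * M * Δt) ≤ p' j := by
    intro j
    rw [hstep j]
    apply mul_le_mul_of_nonneg_left _ (hp j)
    have hS : -M * ∑ k, p k * Δx ≤ Δx * ∑ k, (ustar k j - ustar j k) * p k := by
      rw [Finset.mul_sum, Finset.mul_sum]
      apply Finset.sum_le_sum
      intro i _
      have h1 := (hu i j).1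
      have h2 := (hu j i).2
      nlinarith [mul_nonneg (mul_nonneg hΔx0 (hp i)) (show (0:ℝ) ≤ ustar i j - ustar j i + M by linarith)]
    rw [hsum] at hS
    have : -(M * Δt) ≤ Δt * (Δx * ∑ k, (ustar k j - ustar j k) * p k) := by
      nlinarith
    nlinarith
  refine ⟨fun j => ?_, key⟩
  have := key j
  nlinarith [hp j, hMΔt]
end

section
/- Let δ > 0, Δt > 0, K ≥ 0, L ≥ 0 with (δ + L)Δt < 1. Let J ∈ ℕ, and suppose sequences Φ^{(i)} : Fin J → ℝ for i = 0,…,I satisfy the backward recursion Φ^{(i)}_j = (1 − δΔt)Φ^{(i+1)}_j + Δt·S^{(i)}_j + Δt·δ·U^{(i)}_j, where 0 ≤ S^{(i)}_j ≤ L·(max_m Φ^{(i+1)}_m − Φ^{(i+1)}_j) and |U^{(i)}_j| ≤ K, with terminal data satisfying |Φ^{(I)}_j| ≤ K_Ψ. Then |Φ^{(i)}_j| ≤ K_Ψ + K for all i, j. -/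
open Finset

/-- Abstracted form of Proposition 2: stability of the discretized value
function. -/
theorem discrete_HJB_stability (δ Δt K L KΨ : ℝ)
    (hδ : 0 < δ) (hΔt : 0 < Δt) (hK : 0 ≤ K) (hL : 0 ≤ L) (hKΨ : 0 ≤ KΨ)
    (hstep : (δ + L) * Δt < 1)
    (I J : ℕ) (hJ : 1 ≤ J)
    (Φ : ℕ → Fin J → ℝ) (S U : ℕ → Fin J → ℝ)
    (hrec : ∀ i < I, ∀ j, Φ i j
      = (1 - δ * Δt) * Φ (i + 1) j + Δt * S i j + Δt * δ * U i j)
    (hSnonneg : ∀ i < I, ∀ j, 0 ≤ S i j)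
    (hSbound : ∀ i < I, ∀ j, S i j
      ≤ L * ((Finset.univ.sup' (Finset.univ_nonempty_iff.mpr
            (Fin.pos_iff_nonempty.mp hJ)) (Φ (i + 1))) - Φ (i + 1) j))
    (hU : ∀ i < I, ∀ j, |U i j| ≤ K)
    (hterm : ∀ j, |Φ I j| ≤ KΨ) :
    ∀ i ≤ I, ∀ j, |Φ i j| ≤ KΨ + K := by
  have hne := Finset.univ_nonempty_iff.mpr (Fin.pos_iff_nonempty.mp hJ)
  suffices h : ∀ d i, i + d = I → ∀ j, |Φ i j| ≤ KΨ + K by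
    intro i hi j
    exact h (I - i) i (by omega) j
  intro d
  induction d with
  | zero =>
    intro i hi j
    simp only [Nat.add_zero] at hi
    subst hi
    linarith [hterm j]
  | succ d ih =>
    intro i hi j
    have hiI : i < I := by omega
    have ih' : ∀ j, |Φ (i + 1) j| ≤ KΨ + K := ih (i + 1) (by omega)
    set M := Finset.univ.sup' hne (Φ (i + 1)) with hM
    have hMle : M ≤ KΨ + K := by
      apply Finset.sup'_le
      intro m _
      exact (abs_le.mp (ih' m)).2
    have hjM : Φ (i + 1) j ≤ M := Finset.le_sup' _ (Finset.mem_univ j)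
    have hjlo : -(KΨ + K) ≤ Φ (i + 1) j := (abs_le.mp (ih' j)).1
    have hUj := abs_le.mp (hU i hiI j)
    have hS0 := hSnonneg i hiI j
    have hSb := hSbound i hiI j
    rw [← hM] at hSb
    have hrec' := hrec i hiI j
    have h1 : δ * Δt + L * Δt < 1 := by nlinarith
    rw [abs_le]
    constructor
    · nlinarith [mul_nonneg hΔt.le hS0, mul_nonneg (mul_nonneg hΔt.le hδ.le) (by linarith [hUj.1] : 0 ≤ U i j + K), mul_nonneg (by nlinarith : (0:ℝ) ≤ 1 - δ * Δt) (by linarith : 0 ≤ Φ (i+1) j + (KΨ + K)), mul_nonneg (mul_nonneg hδ.le hΔt.le) hKΨ]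
    · nlinarith [mul_nonneg hΔt.le (by linarith : (0:ℝ) ≤ L * (M - Φ (i+1) j) - S i j),
        mul_nonneg (by nlinarith : (0:ℝ) ≤ 1 - δ * Δt - L * Δt) (by linarith : 0 ≤ (KΨ + K) - Φ (i+1) j),
        mul_nonneg (mul_nonneg hL hΔt.le) (by linarith : 0 ≤ (KΨ + K) - M),
        mul_nonneg (mul_nonneg hδ.le hΔt.le) (by linarith : 0 ≤ (KΨ + K) - K),
        mul_nonneg (mul_nonneg hΔt.le hδ.le) (by linarith [hUj.2] : 0 ≤ K - U i j)]
end
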